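/- arXiv:2404.08631 — 2 statements merged into one kernel-verified Lean document; each statement's English description precedes it below -/
import Mathlib

section
/- (Replacing values below the maximum by the maximum dominates any single-replacement attack) Let d_1 ≤ ... ≤ d_K be reals, K' with 2K' < K, and T ≤ K'. For any choice of T indices s_1 < ... < s_T and any replacement values ṽ_1,...,ṽ_T, the K'-trimmed mean of the resulting sorted multiset is at most the K'-trimmed mean obtained by replacing d_1,...,d_T with d_K. -/
/-!
At least `i + T` of the values `d 1, …, d K` are `≤ d (i + T)`; removing any `T` values and
adding arbitrary ones leaves at least `i` of them, so the `i`-th order statistic of the attacked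
multiset is `≤ d (i + T)`. Replacing `d 1, …, d T` by `d K` makes the `i`-th order statistic
exactly `d (i + T)` for `i + T ≤ K`, which covers the whole trimmed window since `T ≤ K'`.
-/

open Finset

noncomputable def tm (K Kp : ℕ) (e : ℕ → ℝ) : ℝ :=
  (∑ i ∈ Finset.Icc (Kp + 1) (K - Kp), e i) / ((K : ℝ) - 2 * Kp)

noncomputable def sortedOf (E : Multiset ℝ) : ℕ → ℝ :=
  fun i => (E.sort (· ≤ ·)).getD (i - 1) 0

def msOf (K : ℕ) (d : ℕ → ℝ) : Multiset ℝ := (Finset.Icc 1 K).val.map d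

noncomputable def Ub (K Kp : ℕ) (d : ℕ → ℝ) (t : ℕ) : ℝ :=
  (∑ i ∈ Finset.Icc (Kp + 1 + t) (K - Kp + t), d i) / ((K : ℝ) - 2 * Kp)

noncomputable def Lb (K Kp : ℕ) (d : ℕ → ℝ) (t : ℕ) : ℝ :=
  (∑ i ∈ Finset.Icc (Kp + 1 - t) (K - Kp - t), d i) / ((K : ℝ) - 2 * Kp)

theorem List.getD_le_of_lt_countP {α : Type*} [LinearOrder α] {l : List α}
    (hl : l.Pairwise (· ≤ ·)) {i : ℕ} {x : α} (a : α) (hc : i < l.countP (· ≤ x)) :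
    l.getD i a ≤ x := by
  induction l generalizing i with
  | nil => simp at hc
  | cons b t ih =>
    obtain ⟨hb, ht⟩ := List.pairwise_cons.1 hl
    cases i with
    | zero =>
      rw [List.getD_cons_zero]
      by_contra! hxb
      have htail : t.countP (· ≤ x) = 0 :=
        List.countP_eq_zero.2 fun c hc => by simpa using hxb.trans_le (hb c hc)
      simp [htail, hxb.not_ge] at hc
    | succ j =>
      rw [List.countP_cons] at hc
      rw [List.getD_cons_succ]
      exact ih ht (by split at hc <;> omega)

theorem sortedOf_le_of_le_countP {E : Multiset ℝ} {i : ℕ} {x : ℝ} (hi : 1 ≤ i)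
    (hc : i ≤ E.countP (· ≤ x)) : sortedOf E i ≤ x := by
  refine List.getD_le_of_lt_countP (Multiset.pairwise_sort E _) 0 ?_
  rw [← Multiset.coe_countP, Multiset.sort_eq]
  omega

theorem sortedOf_coe {l : List ℝ} (hl : l.Pairwise (· ≤ ·)) (i : ℕ) :
    sortedOf (l : Multiset ℝ) i = l.getD (i - 1) 0 := by
  rw [sortedOf, Multiset.coe_sort, List.mergeSort_eq_self _ (by simpa using hl)]

theorem Multiset.countP_le_countP_tsub_add_card {α : Type*} [DecidableEq α] (p : α → Prop)
    [DecidablePred p] (s t : Multiset α) : s.countP p ≤ (s - t).countP p + card t :=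
  calc s.countP p ≤ (s - t + t).countP p := Multiset.countP_le_of_le p le_tsub_add
    _ = (s - t).countP p + t.countP p := Multiset.countP_add _ _ _
    _ ≤ (s - t).countP p + card t := Nat.add_le_add_left (Multiset.countP_le_card _ _) _

section Monotone

variable {K : ℕ} {d : ℕ → ℝ}

theorem le_countP_msOf (hd : MonotoneOn d (Set.Icc 1 K)) {j : ℕ} (hj : j ≤ K) :
    j ≤ (msOf K d).countP (· ≤ d j) := by
  rw [msOf, Multiset.countP_map, ← Finset.filter_val, Finset.card_val]
  calc j = #(Icc 1 j) := by simp
    _ ≤ _ := Finset.card_le_card fun m hm => by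
      obtain ⟨hm1, hmj⟩ := Finset.mem_Icc.1 hm
      exact Finset.mem_filter.2 ⟨Finset.mem_Icc.2 ⟨hm1, hmj.trans hj⟩,
        hd ⟨hm1, hmj.trans hj⟩ ⟨hm1.trans hmj, hj⟩ hmj⟩

theorem sortedOf_msOf_tsub_add_le (hd : MonotoneOn d (Set.Icc 1 K)) {T : ℕ}
    (R V : Multiset ℝ) (hR : Multiset.card R = T) {i : ℕ} (hi : 1 ≤ i) (hiT : i + T ≤ K) :
    sortedOf (msOf K d - R + V) i ≤ d (i + T) := by
  apply sortedOf_le_of_le_countP hi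
  have := (le_countP_msOf hd hiT).trans
    (Multiset.countP_le_countP_tsub_add_card (· ≤ d (i + T)) (msOf K d) R)
  rw [Multiset.countP_add]
  omega

theorem sortedOf_replicate_add_map_Icc (hd : MonotoneOn d (Set.Icc 1 K)) {T i : ℕ}
    (hi : 1 ≤ i) (hiT : i + T ≤ K) :
    sortedOf (Multiset.replicate T (d K) + (Icc (T + 1) K).val.map d) i = d (i + T) := by
  set L := (List.range' (T + 1) (K - T)).map d
  have hL : ∀ a ∈ L, a ≤ d K := by
    simp only [L, List.mem_map, List.mem_range'_1]
    rintro _ ⟨m, hm, rfl⟩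
    exact hd ⟨by omega, by omega⟩ ⟨by omega, le_rfl⟩ (by omega)
  have hsorted : (L ++ List.replicate T (d K)).Pairwise (· ≤ ·) := by
    refine List.pairwise_append.2 ⟨?_, List.pairwise_replicate.2 (.inr le_rfl), ?_⟩
    · refine List.pairwise_map.2 ((List.pairwise_le_range' 1).imp_of_mem fun ha hb hab => ?_)
      rw [List.mem_range'_1] at ha hb
      exact hd ⟨by omega, by omega⟩ ⟨by omega, by omega⟩ hab
    · intro a ha b hb
      rw [List.eq_of_mem_replicate hb]
      exact hL a ha
  have hperm : Multiset.replicate T (d K) + (Icc (T + 1) K).val.map d =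
      ↑(L ++ List.replicate T (d K)) := by
    rw [add_comm, Nat.Icc_eq_range', show K + 1 - (T + 1) = K - T by omega]
    simp [L, Multiset.map_coe, ← Multiset.coe_add, Multiset.coe_replicate]
  have hlt : i - 1 < L.length := by simp [L]; omega
  rw [hperm, sortedOf_coe hsorted, List.getD_append _ _ _ _ hlt, List.getD_eq_getElem _ 0 hlt]
  simp only [L, List.getElem_map, List.getElem_range']
  congr 1
  omega

end Monotone

theorem stmt16_general (K Kp T : ℕ) (hK : 2 * Kp < K) (hT : T ≤ Kp) (d : ℕ → ℝ)
    (hmono : ∀ i j, 1 ≤ i → i ≤ j → j ≤ K → d i ≤ d j)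
    (s : Fin T → ℕ)
    (v : Fin T → ℝ) :
    tm K Kp (sortedOf
      ((msOf K d - Multiset.map (fun k : Fin T => d (s k)) (Finset.univ : Finset (Fin T)).val)
        + Multiset.map v (Finset.univ : Finset (Fin T)).val)) ≤
    tm K Kp (sortedOf (Multiset.replicate T (d K) + (Finset.Icc (T + 1) K).val.map d)) := by
  have hd : MonotoneOn d (Set.Icc 1 K) := fun i hi j hj hij => hmono i j hi.1 hij hj.2
  have hden : (0 : ℝ) < K - 2 * Kp := by
    rw [sub_pos]
    exact_mod_cast hK
  unfold tm
  gcongr with i hi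
  obtain ⟨hi1, hiK⟩ := Finset.mem_Icc.1 hi
  rw [sortedOf_replicate_add_map_Icc hd (by omega) (by omega)]
  exact sortedOf_msOf_tsub_add_le hd _ _ (by simp) (by omega) (by omega)

theorem stmt16 (K Kp T : ℕ) (hK : 2 * Kp < K) (hT : T ≤ Kp) (d : ℕ → ℝ)
    (hmono : ∀ i j, 1 ≤ i → i ≤ j → j ≤ K → d i ≤ d j)
    (s : Fin T → ℕ) (hs : StrictMono s)
    (hs1 : ∀ k, 1 ≤ s k) (hsK : ∀ k, s k ≤ K)
    (v : Fin T → ℝ) :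
    tm K Kp (sortedOf
      ((msOf K d - Multiset.map (fun k : Fin T => d (s k)) (Finset.univ : Finset (Fin T)).val)
        + Multiset.map v (Finset.univ : Finset (Fin T)).val)) ≤
    tm K Kp (sortedOf (Multiset.replicate T (d K) + (Finset.Icc (T + 1) K).val.map d)) :=
  stmt16_general K Kp T hK hT d hmono s v
end

section
/- (Tightness of certified poisoning size, Individual Attack) Let T* = max{T ≤ K' : U^{ŷ}(T) < min_{c≠ŷ} L^c(T)} and suppose T*+1 ≤ K'. Then there exist poisoned per-class distance multisets, each differing from the clean ones in at most T*+1 elements, such that the robust distance of ŷ is greater than or equal to the robust distance of some class c ≠ ŷ (so ŷ is not guaranteed to be the unique argmin). -/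
open Finset

/-! Both bounds are attained. Replacing the `t` smallest clean distances of `ŷ` by copies of its
largest one shifts its sorted sequence up by `t`, so its trimmed mean becomes `U^ŷ(t)`; replacing
the `t` largest distances of a class `c` by copies of its smallest one shifts its sorted sequence
down by `t`, so its trimmed mean becomes `L^c(t)`. By maximality of `T*`, for `t = T* + 1` some
`c ≠ ŷ` has `L^c(t) ≤ U^ŷ(t)`, and poisoning `ŷ` and `c` in these two ways is the attack. -/

theorem Finset.sum_Icc_add_right {M : Type*} [AddCommMonoid M] (f : ℕ → M) (a b c : ℕ) :
    ∑ x ∈ Icc a b, f (x + c) = ∑ x ∈ Icc (a + c) (b + c), f x := by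
  rw [← map_add_right_Icc, sum_map]
  rfl

section MsOf

variable {K : ℕ} {f : ℕ → ℝ}

lemma msOf_eq_coe : msOf K f = ((List.range' 1 K).map f : List ℝ) := by
  rw [msOf, Nat.Icc_eq_range']
  simp

lemma card_msOf : Multiset.card (msOf K f) = K := by
  simp [msOf_eq_coe]

lemma sort_msOf (hf : MonotoneOn f (Set.Icc 1 K)) :
    (msOf K f).sort (· ≤ ·) = (List.range' 1 K).map f := by
  rw [msOf_eq_coe, Multiset.coe_sort]
  refine List.mergeSort_eq_self _ ?_
  rw [List.pairwise_map]
  refine (List.pairwise_lt_range' (s := 1) (n := K)).imp_of_mem fun ha hb hab => ?_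
  rw [List.mem_range'_1] at ha hb
  exact hf ⟨ha.1, by omega⟩ ⟨hb.1, by omega⟩ hab.le

lemma sortedOf_msOf (hf : MonotoneOn f (Set.Icc 1 K)) {i : ℕ} (hi1 : 1 ≤ i) (hiK : i ≤ K) :
    sortedOf (msOf K f) i = f i := by
  have hlen : i - 1 < ((List.range' 1 K).map f).length := by rw [List.length_map, List.length_range']; omega
  rw [sortedOf, sort_msOf hf, List.getD_eq_getElem _ _ hlen]
  simp only [List.getElem_map, List.getElem_range']
  congr 1
  omega

lemma tm_sortedOf_msOf (Kp : ℕ) (hf : MonotoneOn f (Set.Icc 1 K)) :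
    tm K Kp (sortedOf (msOf K f)) = tm K Kp f := by
  unfold tm
  congr 1
  refine sum_congr rfl fun i hi => ?_
  rw [mem_Icc] at hi
  exact sortedOf_msOf hf (by omega) (by omega)

lemma map_window_le_msOf {n a : ℕ} (ha : 1 ≤ a) (haK : a + n ≤ K + 1) :
    (range n).val.map (fun i => f (a + i)) ≤ msOf K f := by
  have hsub : (range n).map (addLeftEmbedding a) ⊆ Icc 1 K := by
    intro x hx
    simp only [mem_map, mem_range, addLeftEmbedding_apply] at hx
    obtain ⟨i, hi, rfl⟩ := hx
    rw [mem_Icc]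
    omega
  have := Multiset.map_le_map (f := f) (val_le_iff.2 hsub)
  rwa [map_val, Multiset.map_map] at this

lemma card_msOf_sub_msOf_le_of_window {e : ℕ → ℝ} {n a b : ℕ} (ha : 1 ≤ a)
    (haK : a + n ≤ K + 1) (hb : 1 ≤ b) (hbK : b + n ≤ K + 1)
    (hfe : ∀ i < n, f (a + i) = e (b + i)) :
    Multiset.card (msOf K f - msOf K e) ≤ K - n := by
  set common := (range n).val.map (fun i => f (a + i))
  have hf : common ≤ msOf K f := map_window_le_msOf ha haK
  have he : common ≤ msOf K e := by
    have : common = (range n).val.map (fun i => e (b + i)) :=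
      Multiset.map_congr rfl fun i hi => hfe i (by simpa using hi)
    exact this ▸ map_window_le_msOf (f := e) hb hbK
  calc Multiset.card (msOf K f - msOf K e)
      ≤ Multiset.card (msOf K f - common) := Multiset.card_le_card (tsub_le_tsub_left he _)
    _ = K - n := by rw [Multiset.card_sub hf, card_msOf]; simp [common]

end MsOf

def shiftUp (K t : ℕ) (d : ℕ → ℝ) (i : ℕ) : ℝ := d (min (i + t) K)

def shiftDown (t : ℕ) (d : ℕ → ℝ) (i : ℕ) : ℝ := d (max (i - t) 1)

section Shifts

variable {K Kp t : ℕ} {d : ℕ → ℝ}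

lemma MonotoneOn.shiftUp (hd : MonotoneOn d (Set.Icc 1 K)) :
    MonotoneOn (shiftUp K t d) (Set.Icc 1 K) :=
  hd.comp (fun i _ j _ hij => by omega) fun i hi => by
    simp only [Set.mem_Icc] at hi ⊢; omega

lemma MonotoneOn.shiftDown (hd : MonotoneOn d (Set.Icc 1 K)) :
    MonotoneOn (shiftDown t d) (Set.Icc 1 K) :=
  hd.comp (fun i _ j _ hij => by omega) fun i hi => by
    simp only [Set.mem_Icc] at hi ⊢; omega

lemma tm_shiftUp (ht : t ≤ Kp) : tm K Kp (shiftUp K t d) = Ub K Kp d t := by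
  unfold tm Ub
  rw [← sum_Icc_add_right]
  congr 1
  refine sum_congr rfl fun i hi => ?_
  rw [mem_Icc] at hi
  rw [shiftUp, min_eq_left (by omega)]

lemma tm_shiftDown (hKp : 2 * Kp < K) (ht : t ≤ Kp) : tm K Kp (shiftDown t d) = Lb K Kp d t := by
  unfold tm Lb
  rw [show Icc (Kp + 1) (K - Kp) = Icc (Kp + 1 - t + t) (K - Kp - t + t) by congr 1 <;> omega,
    ← sum_Icc_add_right]
  congr 1
  refine sum_congr rfl fun i hi => ?_
  rw [mem_Icc] at hi
  rw [shiftDown, Nat.add_sub_cancel, max_eq_left (by omega)]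

lemma card_msOf_sub_msOf_shiftUp (ht : t ≤ K) :
    Multiset.card (msOf K d - msOf K (shiftUp K t d)) ≤ t := by
  have := card_msOf_sub_msOf_le_of_window (K := K) (f := d) (e := shiftUp K t d) (n := K - t)
    (a := 1 + t) (b := 1) (by omega) (by omega) le_rfl (by omega) fun i hi => by
      rw [shiftUp, min_eq_left (by omega)]; ring_nf
  omega

lemma card_msOf_sub_msOf_shiftDown (ht : t ≤ K) :
    Multiset.card (msOf K d - msOf K (shiftDown t d)) ≤ t := by
  have := card_msOf_sub_msOf_le_of_window (K := K) (f := d) (e := shiftDown t d) (n := K - t)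
    (a := 1) (b := 1 + t) le_rfl (by omega) (by omega) (by omega) fun i hi => by
      rw [shiftDown, max_eq_left (by omega)]; congr 1; omega
  omega

end Shifts

theorem stmt17 (C K Kp : ℕ) (hK : 2 * Kp < K)
    (d : Fin C → ℕ → ℝ)
    (hmono : ∀ c, ∀ i j, 1 ≤ i → i ≤ j → j ≤ K → d c i ≤ d c j)
    (yhat : Fin C) (Tstar : ℕ)
    (hmax : IsGreatest
      {T | T ≤ Kp ∧ ∀ c, c ≠ yhat → Ub K Kp (d yhat) T < Lb K Kp (d c) T} Tstar)
    (hT1 : Tstar + 1 ≤ Kp) :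
    ∃ E : Fin C → Multiset ℝ,
      (∀ c, Multiset.card (E c) = K) ∧
      (∀ c, Multiset.card (msOf K (d c) - E c) ≤ Tstar + 1) ∧
      ∃ c, c ≠ yhat ∧ tm K Kp (sortedOf (E c)) ≤ tm K Kp (sortedOf (E yhat)) := by
  set t := Tstar + 1
  obtain ⟨c, hcy, hLU⟩ : ∃ c, c ≠ yhat ∧ Lb K Kp (d c) t ≤ Ub K Kp (d yhat) t := by
    by_contra! h
    exact absurd (hmax.2 ⟨hT1, h⟩) (by omega)
  have hd : ∀ c, MonotoneOn (d c) (Set.Icc 1 K) := fun c i hi j hj hij => hmono c i j hi.1 hij hj.2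
  classical
  let E := Function.update (Function.update (fun c => msOf K (d c)) yhat
    (msOf K (shiftUp K t (d yhat)))) c (msOf K (shiftDown t (d c)))
  have hEy : E yhat = msOf K (shiftUp K t (d yhat)) := by simp [E, hcy.symm]
  have hEc : E c = msOf K (shiftDown t (d c)) := by simp [E]
  refine ⟨E, fun c' => ?_, fun c' => ?_, c, hcy, ?_⟩
  · by_cases h1 : c' = c
    · rw [h1, hEc, card_msOf]
    by_cases h2 : c' = yhat
    · rw [h2, hEy, card_msOf]
    simp [E, h1, h2, card_msOf]
  · by_cases h1 : c' = c
    · rw [h1, hEc]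
      exact card_msOf_sub_msOf_shiftDown (by omega)
    by_cases h2 : c' = yhat
    · rw [h2, hEy]
      exact card_msOf_sub_msOf_shiftUp (by omega)
    simp [E, h1, h2]
  · rwa [hEy, hEc, tm_sortedOf_msOf Kp (hd yhat).shiftUp, tm_sortedOf_msOf Kp (hd c).shiftDown,
      tm_shiftUp hT1, tm_shiftDown hK hT1]
end
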